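/- arXiv:2411.18584 — 2 statements merged into one kernel-verified Lean document; each statement's English description precedes it below -/
import Mathlib

section
/- For every w ∈ D_n, the Demazure product of the simple generator s_n with w satisfies s_n ⋆ w = h_{n−1, [−n]}(s_n·w), where s_n·w is the ordinary product and [−n] is the one-element list. -/
open Equiv

/-- The key of `a : ℤ` in the total order `1 < 2 < ⋯ < n < -n < ⋯ < -2 < -1` on `±[n]`:
elements of `±[n]` get the keys `1, …, 2n` (in order); anything else gets key `2n+1`. -/
def dkey (n : ℕ) (a : ℤ) : ℤ :=
  if 1 ≤ a ∧ a ≤ (n : ℤ) then a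
  else if -(n : ℤ) ≤ a ∧ a ≤ -1 then 2 * n + 1 + a
  else 2 * n + 1

/-- `a < b` in the total order `1 < 2 < ⋯ < n < -n < ⋯ < -2 < -1` on `±[n]`. -/
def dlt (n : ℕ) (a b : ℤ) : Prop := dkey n a < dkey n b

instance (n : ℕ) (a b : ℤ) : Decidable (dlt n a b) :=
  inferInstanceAs (Decidable (dkey n a < dkey n b))

/-- `a` is an element of `±[n] = {1,…,n} ∪ {-1,…,-n}`. -/
def inPM (n : ℕ) (a : ℤ) : Prop := a ≠ 0 ∧ |a| ≤ (n : ℤ)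

instance (n : ℕ) (a : ℤ) : Decidable (inPM n a) :=
  inferInstanceAs (Decidable (a ≠ 0 ∧ |a| ≤ (n : ℤ)))

/-- The element of `±[n]` whose key is `k` (for `1 ≤ k ≤ 2n`). -/
def ofKey (n : ℕ) (k : ℤ) : ℤ := if k ≤ (n : ℤ) then k else k - (2 * n + 1)

/-- A signed permutation of `±[n]`, viewed as a permutation of `ℤ`:
it commutes with negation and fixes everything outside `±[n]`. -/
def IsSignedPerm (n : ℕ) (w : Perm ℤ) : Prop :=
  (∀ a : ℤ, w (-a) = -(w a)) ∧ ∀ a : ℤ, (n : ℤ) < |a| → w a = a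

/-- An even signed permutation of `±[n]`, i.e. an element of the group `D_n`. -/
def IsEvenSignedPerm (n : ℕ) (w : Perm ℤ) : Prop :=
  IsSignedPerm n w ∧ Even ((Finset.Icc (1 : ℤ) (n : ℤ)).filter fun i => w i < 0).card

/-- The simple generators `s_1, …, s_n` of `D_n`:  for `1 ≤ i ≤ n-1`, `s_i` exchanges the
values `i ↔ i+1` and `-i ↔ -(i+1)`;  `s_n` exchanges the values `n-1 ↔ -n` and `n ↔ -(n-1)`. -/
def sgen (n i : ℕ) : Perm ℤ :=
  if i = n then Equiv.swap ((n : ℤ) - 1) (-(n : ℤ)) * Equiv.swap (n : ℤ) (-((n : ℤ) - 1))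
  else Equiv.swap (i : ℤ) ((i : ℤ) + 1) * Equiv.swap (-(i : ℤ)) (-((i : ℤ) + 1))

/-- The product `s_{l₁} s_{l₂} ⋯ s_{l_k}` of the word `l = [l₁, …, l_k]`. -/
def wordProd (n : ℕ) (l : List ℕ) : Perm ℤ := (l.map (sgen n)).prod

/-- The Coxeter length of `w ∈ D_n`: the least length of a word in `s_1, …, s_n` whose
product is `w`. -/
noncomputable def DLength (n : ℕ) (w : Perm ℤ) : ℕ :=
  sInf {k | ∃ l : List ℕ, (∀ i ∈ l, 1 ≤ i ∧ i ≤ n) ∧ l.length = k ∧ wordProd n l = w}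

/-- `dem` is the Demazure product of the Coxeter group `D_n`: the (unique) associative
product on `D_n`, with identity `id`, such that for each simple generator `s` and `u ∈ D_n`,
`s ⋆ u = s·u` if `ℓ(s·u) > ℓ(u)`, and `s ⋆ u = u` if `ℓ(s·u) < ℓ(u)`. -/
def IsDemazure (n : ℕ) (dem : Perm ℤ → Perm ℤ → Perm ℤ) : Prop :=
  (∀ u v, IsEvenSignedPerm n u → IsEvenSignedPerm n v → IsEvenSignedPerm n (dem u v)) ∧
  (∀ u v w, IsEvenSignedPerm n u → IsEvenSignedPerm n v → IsEvenSignedPerm n w →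
      dem (dem u v) w = dem u (dem v w)) ∧
  (∀ u, IsEvenSignedPerm n u → dem 1 u = u ∧ dem u 1 = u) ∧
  (∀ i, 1 ≤ i → i ≤ n → ∀ u, IsEvenSignedPerm n u →
      (DLength n u < DLength n (sgen n i * u) → dem (sgen n i) u = sgen n i * u) ∧
      (DLength n (sgen n i * u) < DLength n u → dem (sgen n i) u = u))

/-- The swap performed in one step of the hopping procedure: exchange the values `t ↔ q`
and simultaneously `-t ↔ -q` (unless `t = -q`). -/
def hswap (t q : ℤ) : Perm ℤ :=
  if t = -q then Equiv.swap t q else Equiv.swap t q * Equiv.swap (-t) (-q)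

/-- `q` is eligible for hopping `t` in `w`: `q ∈ ±[n]`, `q > t` in the order on `±[n]`,
and `q` occurs strictly to the right of `t` in the unfolding of `w`. -/
def HopStep (n : ℕ) (w : Perm ℤ) (t q : ℤ) : Prop :=
  inPM n q ∧ dlt n t q ∧ dkey n (w⁻¹ t) < dkey n (w⁻¹ q) ∧ dkey n (w⁻¹ q) ≤ 2 * n

instance (n : ℕ) (w : Perm ℤ) (t q : ℤ) : Decidable (HopStep n w t q) :=
  inferInstanceAs (Decidable
    (inPM n q ∧ dlt n t q ∧ dkey n (w⁻¹ t) < dkey n (w⁻¹ q) ∧ dkey n (w⁻¹ q) ≤ 2 * n))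

theorem hop_measure (n : ℕ) (w : Perm ℤ) (t q : ℤ) (h : HopStep n w t q) :
    (2 * (n : ℤ) + 1 - dkey n ((hswap t q * w)⁻¹ t)).toNat
      < (2 * (n : ℤ) + 1 - dkey n (w⁻¹ t)).toNat := by
  obtain ⟨⟨hq0, _⟩, _, hlt, hle⟩ := h
  have key : (hswap t q * w)⁻¹ t = w⁻¹ q := by
    have hs : (hswap t q)⁻¹ t = q := by
      unfold hswap
      split_ifs with he
      · subst he
        simp [Equiv.swap_inv, Equiv.swap_apply_left]
      · have h1 : q ≠ -t := fun hc => he (by omega)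
        have h2 : q ≠ -q := fun hc => hq0 (by omega)
        simp [mul_inv_rev, Equiv.swap_inv, Equiv.Perm.mul_apply, Equiv.swap_apply_left,
          Equiv.swap_apply_of_ne_of_ne h1 h2]
    rw [mul_inv_rev, Equiv.Perm.mul_apply, hs]
  rw [key]
  omega

/-- The hopping operator `h_{t,L}`: repeatedly pick the element `q` of `L`, occurring
latest in `L`, among those greater than `t` occurring strictly to the right of `t` in
the unfolding of `w`; swap the values `t ↔ q` (and `-t ↔ -q`, unless `t = -q`); stop
when no such `q` exists. -/
def hop (n : ℕ) (t : ℤ) (L : List ℤ) (w : Perm ℤ) : Perm ℤ :=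
  match h : L.reverse.find? (fun q => decide (HopStep n w t q)) with
  | none => w
  | some q => hop n t L (hswap t q * w)
termination_by (2 * (n : ℤ) + 1 - dkey n (w⁻¹ t)).toNat
decreasing_by
  have hq := List.find?_some h
  simp only [decide_eq_true_eq] at hq
  exact hop_measure n w t q hq

/-- The unfolding `[w(1), …, w(n), -w(n), …, -w(1)]` of a signed permutation `w`. -/
def unfoldList (n : ℕ) (w : Perm ℤ) : List ℤ :=
  (List.range (2 * n)).map fun p => w (ofKey n ((p : ℤ) + 1))

/-- `w ↖ t`: the ordered list of entries of the unfolding of `w` occurring strictly to the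
left of the value `t` and lying strictly between `t` and `-t` in the order on `±[n]`. -/
def liftD (n : ℕ) (w : Perm ℤ) (t : ℤ) : List ℤ :=
  ((unfoldList n w).take (dkey n (w⁻¹ t) - 1).toNat).filter
    fun a => decide (dlt n t a ∧ dlt n a (-t))

/-- `L ∼ₜ L'` : the hopping operators `h_{t,L}` and `h_{t,L'}` agree on all of `D_n`. -/
def HopEquiv (n : ℕ) (t : ℤ) (L L' : List ℤ) : Prop :=
  ∀ u : Perm ℤ, IsEvenSignedPerm n u → hop n t L u = hop n t L' u

/-- The list `[a, a+1, …, b]` (as integers). -/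
def listUp (a b : ℕ) : List ℤ := (List.range (b + 1 - a)).map fun k => (a : ℤ) + k

/-- The list `[-b, -(b-1), …, -a]` (as integers). -/
def listNegUp (a b : ℕ) : List ℤ := (List.range (b + 1 - a)).map fun k => -(b : ℤ) + k

/-- For `1 ≤ i ≤ n-2` : `Q` is one of the minimal coset representatives
(form 0: `id`; form 1: `s_i ⋯ s_j`; form 2: `s_i ⋯ s_{n-2} s_n s_{n-1} ⋯ s_j`;
form 3: `s_i ⋯ s_{n-2} s_n`). -/
def QForm (n i : ℕ) (Q : Perm ℤ) : Prop :=
  Q = 1 ∨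
  (∃ j, i ≤ j ∧ j ≤ n - 1 ∧ Q = wordProd n (List.range' i (j + 1 - i))) ∨
  (∃ j, i ≤ j ∧ j ≤ n - 1 ∧
    Q = wordProd n (List.range' i (n - 1 - i) ++ [n] ++ (List.range' j (n - j)).reverse)) ∨
  Q = wordProd n (List.range' i (n - 1 - i) ++ [n])

/-- `Q` is one of the four elements `id`, `s_{n-1}`, `s_n s_{n-1}`, `s_n` of
`W_{{s_{n-1}, s_n}}`. -/
def QFormTop (n : ℕ) (Q : Perm ℤ) : Prop :=
  Q = 1 ∨ Q = sgen n (n - 1) ∨ Q = sgen n n * sgen n (n - 1) ∨ Q = sgen n n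

/-- For `1 ≤ i ≤ n-2`: `(Q, L)` is a factor of a parabolic factorization together with
its associated list `L_i`. -/
def QList (n i : ℕ) (Q : Perm ℤ) (L : List ℤ) : Prop :=
  (Q = 1 ∧ L = []) ∨
  (∃ j, i ≤ j ∧ j ≤ n - 1 ∧ Q = wordProd n (List.range' i (j + 1 - i)) ∧
    L = listUp (i + 1) (j + 1)) ∨
  (∃ j, i ≤ j ∧ j ≤ n - 1 ∧
    Q = wordProd n (List.range' i (n - 1 - i) ++ [n] ++ (List.range' j (n - j)).reverse) ∧
    L = listUp (i + 1) n ++ listNegUp (j + 1) n) ∨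
  (Q = wordProd n (List.range' i (n - 1 - i) ++ [n]) ∧
    L = listUp (i + 1) (n - 1) ++ [-(n : ℤ)])

/-- `(Q, L)` is the top factor `Q_{n-1}` of a parabolic factorization together with its
associated list `L_{n-1}`. -/
def QListTop (n : ℕ) (Q : Perm ℤ) (L : List ℤ) : Prop :=
  (Q = 1 ∧ L = []) ∨ (Q = sgen n (n - 1) ∧ L = [(n : ℤ)]) ∨
  (Q = sgen n n * sgen n (n - 1) ∧ L = [(n : ℤ), -(n : ℤ)]) ∨
  (Q = sgen n n ∧ L = [-(n : ℤ)])

/-- The partial product `Q_{n-1} Q_{n-2} ⋯ Q_k` of a parabolic factorization. -/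
def prodQ (n : ℕ) (Q : ℕ → Perm ℤ) (k : ℕ) : Perm ℤ :=
  (((List.range' k (n - k)).reverse).map Q).prod

/-- The letterwise extended Demazure action of the generator `s_i` (for `1 ≤ i ≤ n-1`) on an
arbitrary signed permutation: `s_i ⋆ u = s_i·u` if the value `i` occurs strictly to the left
of the value `i+1` in the unfolding of `u`, and `u` otherwise. -/
def demStep (n i : ℕ) (u : Perm ℤ) : Perm ℤ :=
  if dkey n (u⁻¹ (i : ℤ)) < dkey n (u⁻¹ ((i : ℤ) + 1)) then sgen n i * u else u

/-- The letterwise extended Demazure action of a word: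
`(s_{a₁} ⋯ s_{a_k}) ⋆ u = s_{a₁} ⋆ (s_{a₂} ⋆ (⋯ (s_{a_k} ⋆ u)))`. -/
def demWord (n : ℕ) (l : List ℕ) (u : Perm ℤ) : Perm ℤ := l.foldr (demStep n) u

/-- A member of the symmetric group on `±[n]`, viewed as a permutation of `ℤ`:
it fixes `0` and everything of absolute value `> n`. -/
def IsPermPM (n : ℕ) (w : Perm ℤ) : Prop := ∀ a : ℤ, a = 0 ∨ (n : ℤ) < |a| → w a = a

/-- The simple generators of the symmetric group on `±[n]` (type `A_{2n-1}`):
`agen n k` (for `1 ≤ k ≤ 2n-1`) transposes the order-adjacent elements of `±[n]`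
with keys `k` and `k+1`. -/
def agen (n k : ℕ) : Perm ℤ := Equiv.swap (ofKey n (k : ℤ)) (ofKey n ((k : ℤ) + 1))

/-- The Coxeter length of an element of the symmetric group on `±[n]`. -/
noncomputable def ALength (n : ℕ) (w : Perm ℤ) : ℕ :=
  sInf {k | ∃ l : List ℕ, (∀ i ∈ l, 1 ≤ i ∧ i ≤ 2 * n - 1) ∧ l.length = k ∧
    (l.map (agen n)).prod = w}

/-- `dem` is the Demazure product of the symmetric group on `±[n]`, viewed as a Coxeter
group of type `A_{2n-1}` with simple generators the transpositions of order-adjacent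
elements of `±[n]`. -/
def IsDemazureA (n : ℕ) (dem : Perm ℤ → Perm ℤ → Perm ℤ) : Prop :=
  (∀ u v, IsPermPM n u → IsPermPM n v → IsPermPM n (dem u v)) ∧
  (∀ u v w, IsPermPM n u → IsPermPM n v → IsPermPM n w →
      dem (dem u v) w = dem u (dem v w)) ∧
  (∀ u, IsPermPM n u → dem 1 u = u ∧ dem u 1 = u) ∧
  (∀ k, 1 ≤ k → k ≤ 2 * n - 1 → ∀ u, IsPermPM n u →
      (ALength n u < ALength n (agen n k * u) → dem (agen n k) u = agen n k * u) ∧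
      (ALength n (agen n k * u) < ALength n u → dem (agen n k) u = u))

/-!
The Coxeter length of `w ∈ D_n` is the type `D` inversion number `invStat n w`, which counts, for
values `c < d` of `[n]`, the inversions of `(c, d)` and of `(c, -d)` in the unfolding of `w`: it
vanishes at the identity, it changes by exactly `±1` under left multiplication by each `s_i`,
increasing precisely when the two values exchanged by `s_i` stand in increasing order, and every
`w ≠ 1` has a generator decreasing it. Hence `s_n ⋆ w` is `s_n w` if `n - 1` stands left of `-n`
in the unfolding of `w`, and `w` otherwise. In `s_n w` these two values are exchanged, so the hop
of `n - 1` over `-n` happens exactly in the second case, and it undoes `s_n`.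
-/

open Finset

section Keys

variable {n : ℕ} {x : ℤ}

lemma inPM_of_pos (h1 : 1 ≤ x) (h2 : x ≤ n) : inPM n x :=
  ⟨by omega, by rw [abs_of_pos (by omega)]; exact h2⟩

lemma inPM.neg (hx : inPM n x) : inPM n (-x) := ⟨neg_ne_zero.2 hx.1, by rw [abs_neg]; exact hx.2⟩

lemma dkey_of_pos (h1 : 1 ≤ x) (h2 : x ≤ n) : dkey n x = x := by
  simp only [dkey]; split_ifs <;> omega

lemma dkey_mem_Icc (hx : inPM n x) : 1 ≤ dkey n x ∧ dkey n x ≤ 2 * n := by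
  obtain ⟨h0, hx⟩ := hx
  rw [abs_le] at hx
  simp only [dkey]; split_ifs <;> omega

lemma dkey_neg (hx : inPM n x) : dkey n (-x) = 2 * n + 1 - dkey n x := by
  obtain ⟨h0, hx⟩ := hx
  rw [abs_le] at hx
  simp only [dkey]; split_ifs <;> omega

lemma ofKey_dkey (hx : inPM n x) : ofKey n (dkey n x) = x := by
  obtain ⟨h0, hx⟩ := hx
  rw [abs_le] at hx
  simp only [dkey, ofKey]; split_ifs <;> omega

lemma dkey_injOn {y : ℤ} (hx : inPM n x) (hy : inPM n y) (h : dkey n x = dkey n y) : x = y := by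
  rw [← ofKey_dkey hx, h, ofKey_dkey hy]

end Keys

namespace IsSignedPerm

variable {n : ℕ} {w v : Perm ℤ}

lemma map_zero (hw : IsSignedPerm n w) : w 0 = 0 := by
  have := hw.1 0
  rw [neg_zero] at this
  omega

lemma inv (hw : IsSignedPerm n w) : IsSignedPerm n w⁻¹ := by
  refine ⟨fun a => ?_, fun a ha => ?_⟩
  · rw [Perm.inv_eq_iff_eq, hw.1]; simp
  · rw [Perm.inv_eq_iff_eq, hw.2 a ha]

lemma mul (hw : IsSignedPerm n w) (hv : IsSignedPerm n v) : IsSignedPerm n (w * v) :=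
  ⟨fun a => by rw [Perm.mul_apply, Perm.mul_apply, hv.1, hw.1],
    fun a ha => by rw [Perm.mul_apply, hv.2 a ha, hw.2 a ha]⟩

lemma inPM_apply (hw : IsSignedPerm n w) {a : ℤ} (ha : inPM n a) : inPM n (w a) := by
  refine ⟨fun h => ha.1 (w.injective (h.trans hw.map_zero.symm)), ?_⟩
  by_contra! hlt
  have := w.injective (hw.2 _ hlt)
  rw [this] at hlt
  exact absurd ha.2 (not_le.2 hlt)

lemma eq_one_of_forall_pos (hw : IsSignedPerm n w) (h : ∀ c : ℤ, 1 ≤ c → c ≤ n → w c = c) :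
    w = 1 := by
  ext a
  rcases lt_trichotomy a 0 with ha | rfl | ha
  · by_cases hn : -a ≤ n
    · have := h (-a) (by omega) hn
      rw [hw.1] at this
      simp only [Perm.one_apply]; omega
    · exact hw.2 a (by rw [abs_of_neg ha]; omega)
  · exact hw.map_zero
  · by_cases hn : a ≤ n
    · exact h a ha hn
    · exact hw.2 a (by rw [abs_of_pos ha]; omega)

end IsSignedPerm

section Generators

variable {n i : ℕ}

lemma sgen_apply_of_lt (h1 : 1 ≤ i) (h2 : i < n) (x : ℤ) :
    sgen n i x = if x = i then (i : ℤ) + 1 else if x = i + 1 then (i : ℤ)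
      else if x = -(i : ℤ) then -((i : ℤ) + 1) else if x = -((i : ℤ) + 1) then -(i : ℤ)
      else x := by
  rw [sgen, if_neg h2.ne]
  simp only [Perm.mul_apply, swap_apply_def]
  split_ifs <;> omega

lemma sgen_self_apply (hn : 2 ≤ n) (x : ℤ) :
    sgen n n x = if x = (n : ℤ) - 1 then -(n : ℤ) else if x = n then -((n : ℤ) - 1)
      else if x = -((n : ℤ) - 1) then (n : ℤ) else if x = -(n : ℤ) then (n : ℤ) - 1 else x := by
  rw [sgen, if_pos rfl]
  simp only [Perm.mul_apply, swap_apply_def]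
  split_ifs <;> omega

lemma sgen_self_apply_sub_one (hn : 2 ≤ n) : sgen n n ((n : ℤ) - 1) = -n := by
  rw [sgen_self_apply hn, if_pos rfl]

lemma sgen_self_apply_neg (hn : 2 ≤ n) : sgen n n (-n) = (n : ℤ) - 1 := by
  rw [sgen_self_apply hn, if_neg (by omega), if_neg (by omega), if_neg (by omega), if_pos rfl]

lemma sgen_mul_self (hn : 2 ≤ n) (h1 : 1 ≤ i) (h2 : i ≤ n) : sgen n i * sgen n i = 1 := by
  ext x
  simp only [Perm.mul_apply, Perm.one_apply]
  rcases h2.lt_or_eq with h2 | rfl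
  · simp only [sgen_apply_of_lt h1 h2]; split_ifs <;> omega
  · simp only [sgen_self_apply hn]; split_ifs <;> omega

lemma isSignedPerm_sgen (hn : 2 ≤ n) (h1 : 1 ≤ i) (h2 : i ≤ n) : IsSignedPerm n (sgen n i) := by
  refine ⟨fun a => ?_, fun a ha => ?_⟩
  all_goals
    try rw [lt_abs] at ha
    rcases h2.lt_or_eq with h2 | rfl
    · simp only [sgen_apply_of_lt h1 h2]; split_ifs <;> omega
    · simp only [sgen_self_apply hn]; split_ifs <;> omega

lemma sgen_self_eq_hswap : sgen n n = hswap ((n : ℤ) - 1) (-n) := by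
  rw [hswap, if_neg (by omega), sgen, if_pos rfl, neg_neg, swap_comm (n : ℤ)]

lemma sgen_mul_inv_apply (hn : 2 ≤ n) (h1 : 1 ≤ i) (h2 : i ≤ n) (w : Perm ℤ) (x : ℤ) :
    (sgen n i * w)⁻¹ x = w⁻¹ (sgen n i x) := by
  rw [mul_inv_rev, Perm.mul_apply, inv_eq_of_mul_eq_one_right (sgen_mul_self hn h1 h2)]

end Generators

section InversionStatistic

variable {n : ℕ}

/-- For values `c < d` of `[n]` standing at positions of keys `x` and `y` in the unfolding, the
number of inversions among the pairs of values `(c, d)` and `(c, -d)`; the key of `-d` is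
`2n + 1 - y`. -/
def pairInv (n : ℕ) (x y : ℤ) : ℕ :=
  (if y < x then 1 else 0) + (if 2 * n + 1 < x + y then 1 else 0)

noncomputable def invSum (n : ℕ) (P : ℤ → ℤ) : ℕ :=
  ∑ cd ∈ Icc (1 : ℤ) n ×ˢ Icc (1 : ℤ) n, if cd.1 < cd.2 then pairInv n (P cd.1) (P cd.2) else 0

noncomputable def invStat (n : ℕ) (w : Perm ℤ) : ℕ := invSum n fun c => dkey n (w⁻¹ c)

lemma pairInv_reflect_right (x y : ℤ) : pairInv n x (2 * n + 1 - y) = pairInv n x y := by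
  simp only [pairInv]; split_ifs <;> omega

lemma invSum_congr {P Q : ℤ → ℤ} (h : ∀ c : ℤ, 1 ≤ c → c ≤ n → P c = Q c) :
    invSum n P = invSum n Q := by
  refine sum_congr rfl fun cd hcd => ?_
  simp only [mem_product, mem_Icc] at hcd
  rw [h _ hcd.1.1 hcd.1.2, h _ hcd.2.1 hcd.2.2]

lemma invStat_one : invStat n 1 = 0 := by
  refine sum_eq_zero fun cd hcd => ?_
  simp only [mem_product, mem_Icc] at hcd
  simp only [inv_one, Perm.one_apply, dkey_of_pos hcd.1.1 hcd.1.2, dkey_of_pos hcd.2.1 hcd.2.2,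
    pairInv]
  split_ifs <;> omega

/-- Precomposing with the transposition of `a, a + 1` only changes the order of this one pair,
provided `ρ` is a modification of `P` invisible to `pairInv` on all other pairs. -/
lemma invSum_comp_swap (P ρ : ℤ → ℤ) {a : ℤ} (ha : 1 ≤ a) (han : a + 1 ≤ n)
    (hρ : ∀ c d : ℤ, 1 ≤ c → c < d → d ≤ n → (c, d) ≠ (a, a + 1) →
      pairInv n (ρ c) (ρ d) = pairInv n (P c) (P d)) :
    invSum n (ρ ∘ swap a (a + 1)) + pairInv n (P a) (P (a + 1)) =
      invSum n P + pairInv n (ρ (a + 1)) (ρ a) := by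
  set τ := swap a (a + 1)
  set s := Icc (1 : ℤ) n ×ˢ Icc (1 : ℤ) n
  have hτ : ∀ c : ℤ, 1 ≤ c → c ≤ n → 1 ≤ τ c ∧ τ c ≤ n := by
    intro c h1 h2; simp only [τ, swap_apply_def]; split_ifs <;> omega
  have hreindex : invSum n (ρ ∘ τ) =
      ∑ cd ∈ s, if τ cd.1 < τ cd.2 then pairInv n (ρ cd.1) (ρ cd.2) else 0 := by
    refine sum_nbij' (fun cd => (τ cd.1, τ cd.2)) (fun cd => (τ cd.1, τ cd.2)) ?_ ?_ ?_ ?_ ?_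
    all_goals
      try (rintro ⟨c, d⟩ hcd; simp only [s, mem_product, mem_Icc] at hcd ⊢)
    · exact ⟨hτ c hcd.1.1 hcd.1.2, hτ d hcd.2.1 hcd.2.2⟩
    · exact ⟨hτ c hcd.1.1 hcd.1.2, hτ d hcd.2.1 hcd.2.2⟩
    · simp [τ]
    · simp [τ]
    · simp [τ]
  have hpoint : ∀ cd ∈ s,
      ((if τ cd.1 < τ cd.2 then pairInv n (ρ cd.1) (ρ cd.2) else 0) +
        if cd = (a, a + 1) then pairInv n (P a) (P (a + 1)) else 0) =
      (if cd.1 < cd.2 then pairInv n (P cd.1) (P cd.2) else 0) +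
        if cd = (a + 1, a) then pairInv n (ρ (a + 1)) (ρ a) else 0 := by
    rintro ⟨c, d⟩ hcd
    simp only [s, mem_product, mem_Icc] at hcd
    by_cases h1 : (c, d) = (a, a + 1)
    · simp only [Prod.mk.injEq] at h1
      obtain ⟨rfl, rfl⟩ := h1
      simp [τ]
    by_cases h2 : (c, d) = (a + 1, a)
    · simp only [Prod.mk.injEq] at h2
      obtain ⟨rfl, rfl⟩ := h2
      simp [τ]
    have hord : τ c < τ d ↔ c < d := by
      simp only [Prod.mk.injEq] at h1 h2
      simp only [τ, swap_apply_def]; split_ifs <;> omega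
    rw [if_neg h1, if_neg h2]
    by_cases hcd' : c < d
    · rw [if_pos (hord.2 hcd'), if_pos hcd', hρ c d hcd.1.1 hcd' hcd.2.2 h1]
    · rw [if_neg (mt hord.1 hcd'), if_neg hcd']
  have hsum := sum_congr rfl hpoint
  have hmem : ∀ c d : ℤ, 1 ≤ c → c ≤ n → 1 ≤ d → d ≤ n → (c, d) ∈ s := by
    intro c d h1 h2 h3 h4; simp only [s, mem_product, mem_Icc]; omega
  rw [sum_add_distrib, sum_add_distrib, sum_ite_eq', sum_ite_eq', if_pos (hmem _ _ ha (by omega)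
    (by omega) han), if_pos (hmem _ _ (by omega) han ha (by omega))] at hsum
  rw [hreindex, invSum, hsum]

end InversionStatistic

section Ascents

variable {n i : ℕ} {w : Perm ℤ}

/-- The combinatorial ascent condition: the two values exchanged by `s_i` (`i < i + 1`, resp.
`n - 1 < -n` for `i = n`) stand in increasing order in the unfolding of `w`. -/
def IsLeftAscent (n i : ℕ) (w : Perm ℤ) : Prop :=
  if i = n then dkey n (w⁻¹ ((n : ℤ) - 1)) < dkey n (w⁻¹ (-(n : ℤ)))
  else dkey n (w⁻¹ (i : ℤ)) < dkey n (w⁻¹ ((i : ℤ) + 1))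

instance (n i : ℕ) (w : Perm ℤ) : Decidable (IsLeftAscent n i w) := by
  unfold IsLeftAscent; infer_instance

lemma isLeftAscent_self_iff :
    IsLeftAscent n n w ↔ dkey n (w⁻¹ ((n : ℤ) - 1)) < dkey n (w⁻¹ (-(n : ℤ))) := by
  simp only [IsLeftAscent, ↓reduceIte]

lemma IsSignedPerm.dkey_inv_apply_neg (hw : IsSignedPerm n w) {c : ℤ} (hc : inPM n c) :
    dkey n (w⁻¹ (-c)) = 2 * n + 1 - dkey n (w⁻¹ c) := by
  rw [hw.inv.1, dkey_neg (hw.inv.inPM_apply hc)]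

lemma IsSignedPerm.dkey_inv_apply_injOn (hw : IsSignedPerm n w) {c d : ℤ} (hc : inPM n c)
    (hd : inPM n d) (h : dkey n (w⁻¹ c) = dkey n (w⁻¹ d)) : c = d :=
  w⁻¹.injective (dkey_injOn (hw.inv.inPM_apply hc) (hw.inv.inPM_apply hd) h)

lemma IsSignedPerm.dkey_inv_apply_sub_one_ne (hn : 2 ≤ n) (hw : IsSignedPerm n w) :
    dkey n (w⁻¹ ((n : ℤ) - 1)) ≠ dkey n (w⁻¹ (-(n : ℤ))) := fun h => absurd
  (hw.dkey_inv_apply_injOn (inPM_of_pos (by omega) (by omega))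
    (inPM_of_pos (n := n) (x := n) (by omega) le_rfl).neg h) (by omega)

lemma IsSignedPerm.isLeftAscent_self_sgen_mul_iff (hn : 2 ≤ n) (hw : IsSignedPerm n w) :
    IsLeftAscent n n (sgen n n * w) ↔ ¬ IsLeftAscent n n w := by
  have := hw.dkey_inv_apply_sub_one_ne hn
  rw [isLeftAscent_self_iff, isLeftAscent_self_iff, sgen_mul_inv_apply hn (by omega) le_rfl,
    sgen_mul_inv_apply hn (by omega) le_rfl, sgen_self_apply_sub_one hn, sgen_self_apply_neg hn]
  omega

lemma invStat_sgen_mul_of_lt (h1 : 1 ≤ i) (h2 : i < n) (hw : IsSignedPerm n w) :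
    (invStat n (sgen n i * w) : ℤ) = invStat n w + if IsLeftAscent n i w then 1 else -1 := by
  set P : ℤ → ℤ := fun c => dkey n (w⁻¹ c)
  have hcomp : invStat n (sgen n i * w) = invSum n (P ∘ swap (i : ℤ) (i + 1)) := by
    refine invSum_congr fun c _ _ => ?_
    simp only [P, Function.comp_apply, sgen_mul_inv_apply (by omega) h1 h2.le,
      sgen_apply_of_lt h1 h2, swap_apply_def]
    congr 2
    split_ifs <;> omega
  have key := invSum_comp_swap (n := n) P P (a := (i : ℤ)) (by omega) (by omega)
    fun _ _ _ _ _ _ => rfl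
  have hne : P i ≠ P (i + 1) := fun h => absurd
    (hw.dkey_inv_apply_injOn (inPM_of_pos (by omega) (by omega)) (inPM_of_pos (by omega)
      (by omega)) h) (by omega)
  rw [hcomp, show invStat n w = invSum n P from rfl]
  simp only [IsLeftAscent, if_neg h2.ne]
  change _ = _ + if P i < P (i + 1) then _ else _
  simp only [pairInv] at key
  split_ifs at key ⊢ <;> omega

lemma invStat_sgen_self_mul (hn : 2 ≤ n) (hw : IsSignedPerm n w) :
    (invStat n (sgen n n * w) : ℤ) = invStat n w + if IsLeftAscent n n w then 1 else -1 := by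
  set P : ℤ → ℤ := fun c => dkey n (w⁻¹ c)
  -- `s_n` exchanges the values `n - 1, n` and negates both, which reflects their keys
  set ρ : ℤ → ℤ := fun c => if (n : ℤ) - 1 ≤ c then 2 * n + 1 - P c else P c
  have hPneg : ∀ c : ℤ, 1 ≤ c → c ≤ n → P (-c) = 2 * n + 1 - P c := fun c h1 h2 =>
    hw.dkey_inv_apply_neg (inPM_of_pos h1 h2)
  have hcomp : invStat n (sgen n n * w) = invSum n (ρ ∘ swap ((n : ℤ) - 1) n) := by
    refine invSum_congr fun c hc1 hc2 => ?_
    rw [Function.comp_apply, sgen_mul_inv_apply hn (by omega) le_rfl]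
    change P (sgen n n c) = ρ (swap ((n : ℤ) - 1) n c)
    rw [sgen_self_apply hn]
    rcases (show c = n - 1 ∨ c = n ∨ c < n - 1 by omega) with rfl | rfl | hc
    · rw [if_pos rfl, swap_apply_left, hPneg n (by omega) le_rfl]
      exact (if_pos (by omega)).symm
    · rw [if_neg (by omega), if_pos rfl, swap_apply_right, hPneg _ (by omega) (by omega)]
      exact (if_pos le_rfl).symm
    · rw [if_neg (by omega), if_neg (by omega), if_neg (by omega), if_neg (by omega),
        swap_apply_of_ne_of_ne (by omega) (by omega)]
      exact (if_neg (by omega)).symm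
  have hρ : ∀ c d : ℤ, 1 ≤ c → c < d → d ≤ n → (c, d) ≠ ((n : ℤ) - 1, (n : ℤ) - 1 + 1) →
      pairInv n (ρ c) (ρ d) = pairInv n (P c) (P d) := by
    intro c d _ hcd _ hne
    simp only [Ne, Prod.mk.injEq] at hne
    simp only [ρ, if_neg (show ¬ (n : ℤ) - 1 ≤ c by omega)]
    split_ifs
    · exact pairInv_reflect_right _ _
    · rfl
  have key := invSum_comp_swap (n := n) P ρ (by omega) (by omega) hρ
  rw [sub_add_cancel] at key
  have hne : P (n - 1) ≠ P (-n) := hw.dkey_inv_apply_sub_one_ne hn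
  rw [hcomp, show invStat n w = invSum n P from rfl]
  simp only [IsLeftAscent]
  change _ = _ + if P (n - 1) < P (-n) then _ else _
  rw [hPneg n (by omega) le_rfl] at hne ⊢
  rw [show ρ n = 2 * n + 1 - P n from if_pos (by omega),
    show ρ (n - 1) = 2 * n + 1 - P (n - 1) from if_pos le_rfl] at key
  simp only [pairInv] at key
  split_ifs at key ⊢ <;> omega

lemma invStat_sgen_mul (hn : 2 ≤ n) (h1 : 1 ≤ i) (h2 : i ≤ n)
    (hw : IsSignedPerm n w) :
    (invStat n (sgen n i * w) : ℤ) = invStat n w + if IsLeftAscent n i w then 1 else -1 := by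
  rcases h2.lt_or_eq with h2 | rfl
  · exact invStat_sgen_mul_of_lt h1 h2 hw
  · exact invStat_sgen_self_mul hn hw

end Ascents

section Parity

variable {n i : ℕ} {w : Perm ℤ}

lemma IsSignedPerm.abs_apply_abs (hw : IsSignedPerm n w) (x : ℤ) : |w (|x|)| = |w x| := by
  rcases abs_choice x with h | h <;> rw [h]
  rw [hw.1, abs_neg]

lemma IsSignedPerm.abs_apply_mem_Icc (hw : IsSignedPerm n w) {x : ℤ} (h1 : 1 ≤ x) (h2 : x ≤ n) :
    1 ≤ |w x| ∧ |w x| ≤ n := by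
  obtain ⟨h0, h⟩ := hw.inPM_apply (inPM_of_pos h1 h2)
  exact ⟨Int.one_le_abs h0, h⟩

lemma IsSignedPerm.card_filter_abs_apply (hw : IsSignedPerm n w) (p : ℤ → Prop)
    [DecidablePred p] :
    ((Icc (1 : ℤ) n).filter fun i => p |w i|).card = ((Icc (1 : ℤ) n).filter p).card := by
  refine card_nbij' (fun i => |w i|) (fun c => |w⁻¹ c|) ?_ ?_ ?_ ?_
  all_goals intro x hx; simp only [coe_filter, mem_Icc, Set.mem_ofPred_eq] at hx ⊢
  · exact ⟨hw.abs_apply_mem_Icc hx.1.1 hx.1.2, hx.2⟩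
  · refine ⟨hw.inv.abs_apply_mem_Icc hx.1.1 hx.1.2, ?_⟩
    rw [hw.abs_apply_abs, Perm.coe_inv, apply_symm_apply, abs_of_pos (by omega : 0 < x)]
    exact hx.2
  · rw [hw.inv.abs_apply_abs, Perm.coe_inv, symm_apply_apply, abs_of_pos (by omega : 0 < x)]
  · rw [hw.abs_apply_abs, Perm.coe_inv, apply_symm_apply, abs_of_pos (by omega : 0 < x)]

lemma IsEvenSignedPerm.sgen_mul (hn : 2 ≤ n) (h1 : 1 ≤ i) (h2 : i ≤ n)
    (hw : IsEvenSignedPerm n w) : IsEvenSignedPerm n (sgen n i * w) := by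
  obtain ⟨hsw, heven⟩ := hw
  refine ⟨(isSignedPerm_sgen hn h1 h2).mul hsw, ?_⟩
  rcases h2.lt_or_eq.imp_right Eq.symm with h2 | rfl
  · convert heven using 2
    refine filter_congr fun x _ => ?_
    rw [Perm.mul_apply, sgen_apply_of_lt h1 h2]
    split_ifs <;> omega
  -- `s_n` flips the sign exactly at the two positions of `±(n - 1)` and `±n`
  have hpoint : ∀ x ∈ Icc (1 : ℤ) n,
      ((if w x < 0 then 1 else 0) + if (sgen n n * w) x < 0 then 1 else 0) =
        (if (n : ℤ) - 1 ≤ |w x| then 1 else 0) + 2 * if w x < 0 ∧ |w x| < n - 1 then 1 else 0 := by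
    intro x hx
    rw [mem_Icc] at hx
    obtain ⟨h0, hb⟩ := hsw.inPM_apply (inPM_of_pos hx.1 hx.2)
    rw [Perm.mul_apply, sgen_self_apply hn]
    rcases abs_cases (w x) with ⟨h, _⟩ | ⟨h, _⟩ <;> rw [h] at hb ⊢ <;> split_ifs <;> omega
  have hflip : ((Icc (1 : ℤ) n).filter fun x => (n : ℤ) - 1 ≤ |w x|).card = 2 := by
    rw [hsw.card_filter_abs_apply (fun c => (n : ℤ) - 1 ≤ c),
      show (Icc (1 : ℤ) n).filter (fun c => (n : ℤ) - 1 ≤ c) = Icc ((n : ℤ) - 1) n by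
        ext c; simp only [mem_filter, mem_Icc]; omega, Int.card_Icc]
    omega
  have hsum := sum_congr rfl hpoint
  rw [sum_add_distrib, sum_add_distrib, ← mul_sum] at hsum
  simp only [← card_filter] at hsum
  rw [Nat.even_iff] at heven ⊢
  omega

end Parity

section Descent

variable {n : ℕ} {w : Perm ℤ}

lemma IsSignedPerm.dkey_inv_apply_of_forall_isLeftAscent (hn : 2 ≤ n) (hw : IsSignedPerm n w)
    (hasc : ∀ i, 1 ≤ i → i ≤ n → IsLeftAscent n i w) :
    (∀ c : ℤ, 1 ≤ c → c < n → dkey n (w⁻¹ c) = c) ∧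
      (dkey n (w⁻¹ n) = n ∨ dkey n (w⁻¹ n) = n + 1) := by
  set P : ℤ → ℤ := fun c => dkey n (w⁻¹ c)
  change (∀ c : ℤ, 1 ≤ c → c < n → P c = c) ∧ (P n = n ∨ P n = n + 1)
  have hchain : ∀ c : ℤ, 1 ≤ c → c < n → P c < P (c + 1) := by
    intro c h1 h2
    lift c to ℕ using (by omega)
    have := hasc c (by omega) (by omega)
    simp only [IsLeftAscent, if_neg (show c ≠ n by omega)] at this
    exact this
  have hmono : ∀ c d : ℤ, 1 ≤ c → c ≤ d → d ≤ n → P c + (d - c) ≤ P d := by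
    intro c d hc hcd hd
    induction d, hcd using Int.leInduction with
    | base => simp
    | succ d hcd ih => linarith [hchain d (by omega) (by omega), ih (by omega)]
  have hP1 : 1 ≤ P 1 := (dkey_mem_Icc (hw.inv.inPM_apply (inPM_of_pos le_rfl (by omega)))).1
  -- `P (-n) = 2n + 1 - P n`, so the ascent at `s_n` bounds `P n` from above
  have hPn : P (n - 1) + P n < 2 * n + 1 := by
    have := isLeftAscent_self_iff.1 (hasc n (by omega) le_rfl)
    rw [hw.dkey_inv_apply_neg (inPM_of_pos (by omega) le_rfl)] at this
    change P (n - 1) < 2 * n + 1 - P n at this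
    omega
  have := hmono 1 (n - 1) le_rfl (by omega) (by omega)
  have := hmono (n - 1) n (by omega) (by omega) le_rfl
  refine ⟨fun c h1 h2 => ?_, by omega⟩
  have := hmono 1 c le_rfl h1 h2.le
  have := hmono c (n - 1) h1 (by omega) (by omega)
  omega

lemma IsEvenSignedPerm.exists_not_isLeftAscent (hn : 2 ≤ n) (hw : IsEvenSignedPerm n w)
    (hne : w ≠ 1) : ∃ i, 1 ≤ i ∧ i ≤ n ∧ ¬ IsLeftAscent n i w := by
  by_contra! hasc
  obtain ⟨hlow, htop⟩ := hw.1.dkey_inv_apply_of_forall_isLeftAscent hn hasc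
  have hinv : ∀ c : ℤ, 1 ≤ c → c ≤ n → w⁻¹ c = ofKey n (dkey n (w⁻¹ c)) := fun c h1 h2 =>
    (ofKey_dkey (hw.1.inv.inPM_apply (inPM_of_pos h1 h2))).symm
  have hfix : ∀ c : ℤ, 1 ≤ c → c < n → w⁻¹ c = c := fun c h1 h2 => by
    rw [hinv c h1 h2.le, hlow c h1 h2, ofKey, if_pos h2.le]
  rcases htop with htop | htop
  · refine hne (inv_eq_one.1 (hw.1.inv.eq_one_of_forall_pos fun c h1 h2 => ?_))
    rcases h2.lt_or_eq with h2 | rfl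
    · exact hfix c h1 h2
    · rw [hinv _ h1 le_rfl, htop, ofKey, if_pos le_rfl]
  -- the only remaining candidate, `w = (1, …, n - 1, -n)`, is odd
  have hwn : w n = -n := by
    have h : w⁻¹ n = -n := by rw [hinv n (by omega) le_rfl, htop, ofKey, if_neg (by omega)]; ring
    rw [Perm.inv_eq_iff_eq] at h
    rw [← neg_neg (n : ℤ), hw.1.1, ← h, neg_neg]
  have hneg : (Icc (1 : ℤ) n).filter (fun x => w x < 0) = {(n : ℤ)} := by
    ext x
    simp only [mem_filter, mem_Icc, mem_singleton]
    constructor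
    · rintro ⟨⟨h1, h2⟩, hx⟩
      by_contra hxn
      have := hfix x h1 (by omega)
      rw [Perm.inv_eq_iff_eq] at this
      omega
    · rintro rfl
      exact ⟨⟨by omega, le_rfl⟩, by rw [hwn]; omega⟩
  have := hw.2
  rw [hneg, card_singleton] at this
  exact Nat.not_even_one this

end Descent

section Length

variable {n : ℕ}

lemma wordProd_cons (i : ℕ) (l : List ℕ) : wordProd n (i :: l) = sgen n i * wordProd n l := by
  simp [wordProd]

lemma isSignedPerm_wordProd (hn : 2 ≤ n) (l : List ℕ) (hl : ∀ i ∈ l, 1 ≤ i ∧ i ≤ n) :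
    IsSignedPerm n (wordProd n l) := by
  induction l with
  | nil => exact ⟨fun _ => rfl, fun _ _ => rfl⟩
  | cons i l ih =>
    obtain ⟨hi1, hi2⟩ := hl i List.mem_cons_self
    rw [wordProd_cons]
    exact (isSignedPerm_sgen hn hi1 hi2).mul (ih fun j hj => hl j (List.mem_cons_of_mem i hj))

lemma invStat_wordProd_le (hn : 2 ≤ n) (l : List ℕ) (hl : ∀ i ∈ l, 1 ≤ i ∧ i ≤ n) :
    invStat n (wordProd n l) ≤ l.length := by
  induction l with
  | nil => simp [wordProd, invStat_one]
  | cons i l ih =>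
    obtain ⟨hi1, hi2⟩ := hl i List.mem_cons_self
    have hl' : ∀ j ∈ l, 1 ≤ j ∧ j ≤ n := fun j hj => hl j (List.mem_cons_of_mem i hj)
    have hstep := invStat_sgen_mul hn hi1 hi2 (isSignedPerm_wordProd hn l hl')
    have := ih hl'
    rw [wordProd_cons, List.length_cons]
    split_ifs at hstep <;> omega

lemma exists_wordProd_eq_of_invStat (hn : 2 ≤ n) (k : ℕ) :
    ∀ w : Perm ℤ, IsEvenSignedPerm n w → invStat n w = k →
      ∃ l : List ℕ, (∀ i ∈ l, 1 ≤ i ∧ i ≤ n) ∧ l.length = k ∧ wordProd n l = w := by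
  induction k with
  | zero =>
    intro w hw hk
    refine ⟨[], by simp, rfl, ?_⟩
    by_contra hne
    obtain ⟨i, h1, h2, hasc⟩ := hw.exists_not_isLeftAscent hn (Ne.symm hne)
    have := invStat_sgen_mul hn h1 h2 hw.1
    rw [if_neg hasc] at this
    omega
  | succ k ih =>
    intro w hw hk
    have hne : w ≠ 1 := by rintro rfl; rw [invStat_one] at hk; omega
    obtain ⟨i, h1, h2, hasc⟩ := hw.exists_not_isLeftAscent hn hne
    have hstep := invStat_sgen_mul hn h1 h2 hw.1
    rw [if_neg hasc] at hstep
    obtain ⟨l, hl, hlen, hprod⟩ := ih _ (hw.sgen_mul hn h1 h2) (by omega)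
    refine ⟨i :: l, ?_, by simp [hlen], ?_⟩
    · simpa [h1, h2] using hl
    · rw [wordProd_cons, hprod, ← mul_assoc, sgen_mul_self hn h1 h2, one_mul]

theorem dLength_eq_invStat (hn : 2 ≤ n) {w : Perm ℤ} (hw : IsEvenSignedPerm n w) :
    DLength n w = invStat n w := by
  obtain ⟨l, hl, hlen, hprod⟩ := exists_wordProd_eq_of_invStat hn _ w hw rfl
  refine le_antisymm (Nat.sInf_le ⟨l, hl, hlen, hprod⟩) (le_csInf ⟨_, l, hl, hlen, hprod⟩ ?_)
  rintro k ⟨l', hl', rfl, rfl⟩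
  exact invStat_wordProd_le hn l' hl'

end Length

section Hopping

variable {n : ℕ} {t q : ℤ} {u : Perm ℤ}

lemma hop_singleton_of_not_hopStep (h : ¬ HopStep n u t q) : hop n t [q] u = u := by
  rw [hop]; split <;> simp_all

lemma hop_singleton_of_hopStep (h : HopStep n u t q) :
    hop n t [q] u = hop n t [q] (hswap t q * u) := by
  rw [hop]; split <;> simp_all

lemma hopStep_last_iff (hn : 2 ≤ n) (hu : IsSignedPerm n u) :
    HopStep n u ((n : ℤ) - 1) (-n) ↔ IsLeftAscent n n u := by
  have hneg : inPM n (-(n : ℤ)) := (inPM_of_pos (by omega) le_rfl).neg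
  rw [isLeftAscent_self_iff]
  refine ⟨fun h => h.2.2.1, fun h => ⟨hneg, ?_, h, (dkey_mem_Icc (hu.inv.inPM_apply hneg)).2⟩⟩
  rw [dlt, dkey_of_pos (by omega) (by omega), dkey_neg (inPM_of_pos (by omega) le_rfl),
    dkey_of_pos (by omega) le_rfl]
  omega

end Hopping

/-- for `w ∈ D_n`, `s_n ⋆ w = h_{n-1,[-n]}(s_n·w)`. -/
theorem demazure_last_gen_as_hopping (n : ℕ) (hn : 2 ≤ n)
    (dem : Perm ℤ → Perm ℤ → Perm ℤ) (hdem : IsDemazure n dem)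
    (w : Perm ℤ) (hw : IsEvenSignedPerm n w) :
    dem (sgen n n) w = hop n ((n : ℤ) - 1) [-(n : ℤ)] (sgen n n * w) := by
  have hsw := hw.sgen_mul hn (by omega) le_rfl
  have hstep : HopStep n (sgen n n * w) ((n : ℤ) - 1) (-n) ↔ ¬ IsLeftAscent n n w := by
    rw [hopStep_last_iff hn hsw.1, hw.1.isLeftAscent_self_sgen_mul_iff hn]
  obtain ⟨hup, hdown⟩ := hdem.2.2.2 n (by omega) le_rfl w hw
  rw [dLength_eq_invStat hn hw, dLength_eq_invStat hn hsw] at hup hdown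
  have hstat := invStat_sgen_self_mul hn hw.1
  by_cases hasc : IsLeftAscent n n w
  · rw [if_pos hasc] at hstat
    rw [hup (by omega), hop_singleton_of_not_hopStep (hstep.not.2 (not_not.2 hasc))]
  · rw [if_neg hasc] at hstat
    rw [hdown (by omega), hop_singleton_of_hopStep (hstep.2 hasc), ← sgen_self_eq_hswap,
      ← mul_assoc, sgen_mul_self hn (by omega) le_rfl, one_mul,
      hop_singleton_of_not_hopStep ((hopStep_last_iff hn hw.1).not.2 hasc)]
end

section
/- Let L be an ordered list of distinct elements of ±[n] containing none of n−1, n, −(n−1), −n. Then for every w ∈ D_n, s_n·( h_{−(n−1), L}( s_n·w ) ) = h_{n, L}(w), where · is the ordinary product. -/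
open Equiv

/-! Conjugation by `s_n` is a signed permutation exchanging `n ↔ -(n-1)` (and `n-1 ↔ -n`) and
fixing every entry of `L`. Since `n` and `-(n-1)` compare in the same way with every such entry,
a hopping step of `n` in `w` by `q` is exactly a hopping step of `-(n-1)` in `s_n w` by `q`, and
conjugating its swap by `s_n` gives the other swap; so the two runs stay conjugate step by step. -/

lemma hop_of_find?_eq_none {n : ℕ} {t : ℤ} {L : List ℤ} {w : Perm ℤ}
    (h : L.reverse.find? (fun q => decide (HopStep n w t q)) = none) : hop n t L w = w := by
  rw [hop, h]

lemma hop_of_find?_eq_some {n : ℕ} {t q : ℤ} {L : List ℤ} {w : Perm ℤ}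
    (h : L.reverse.find? (fun q => decide (HopStep n w t q)) = some q) :
    hop n t L w = hop n t L (hswap t q * w) := by
  rw [hop, h]

section Conjugation

variable {n : ℕ} {s : Perm ℤ}

lemma hswap_apply_mul (hs : ∀ a, s (-a) = -(s a)) (t q : ℤ) :
    hswap (s t) (s q) * s = s * hswap t q := by
  unfold hswap
  simp only [← hs, s.injective.eq_iff]
  split_ifs
  · rw [swap_apply_apply, inv_mul_cancel_right]
  · rw [swap_apply_apply, swap_apply_apply]
    group

lemma hopStep_mul_iff {w : Perm ℤ} {t q : ℤ} (hq : s q = q) (hlt : dlt n (s t) q ↔ dlt n t q) :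
    HopStep n (s * w) (s t) q ↔ HopStep n w t q := by
  have hq' : s⁻¹ q = q := by rw [Perm.inv_eq_iff_eq, hq]
  simp only [HopStep, mul_inv_rev, Perm.mul_apply, Perm.coe_inv, symm_apply_apply, hq', hlt]

theorem hop_mul_eq_mul_hop (hs : ∀ a, s (-a) = -(s a)) (t : ℤ) (L : List ℤ)
    (hL : ∀ q ∈ L, s q = q ∧ (dlt n (s t) q ↔ dlt n t q)) (w : Perm ℤ) :
    hop n (s t) L (s * w) = s * hop n t L w := by
  have hfind : ∀ u : Perm ℤ, L.reverse.find? (fun q => decide (HopStep n (s * u) (s t) q))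
      = L.reverse.find? (fun q => decide (HopStep n u t q)) := fun u =>
    List.find?_congr fun q hq => by
      obtain ⟨hsq, hlt⟩ := hL q (List.mem_reverse.mp hq)
      simp only [hopStep_mul_iff hsq hlt]
  induction w using hop.induct n t L with
  | case1 w hnone =>
    rw [hop_of_find?_eq_none hnone, hop_of_find?_eq_none (by rwa [hfind])]
  | case2 w q hsome ih =>
    have hsq : s q = q := (hL q (List.mem_reverse.mp (List.mem_of_find?_eq_some hsome))).1
    rw [hop_of_find?_eq_some hsome, hop_of_find?_eq_some (by rwa [hfind]), ← ih, ← mul_assoc,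
      ← hsq, hswap_apply_mul hs, hsq, mul_assoc]

end Conjugation

section LastGenerator

variable {n : ℕ}

lemma sgen_last_apply (hn : 2 ≤ n) (a : ℤ) :
    sgen n n a = if a = n then -((n : ℤ) - 1) else if a = -((n : ℤ) - 1) then n
      else if a = (n : ℤ) - 1 then -(n : ℤ) else if a = -(n : ℤ) then (n : ℤ) - 1 else a := by
  rw [sgen, if_pos rfl]
  simp only [Perm.mul_apply, swap_apply_def]
  split_ifs <;> omega

lemma sgen_last_neg (hn : 2 ≤ n) (a : ℤ) : sgen n n (-a) = -(sgen n n a) := by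
  simp only [sgen_last_apply hn]
  split_ifs <;> omega

lemma sgen_last_mul_self (hn : 2 ≤ n) : sgen n n * sgen n n = 1 := by
  ext a
  simp only [Perm.mul_apply, Perm.one_apply, sgen_last_apply hn]
  split_ifs <;> omega

lemma sgen_last_natCast (hn : 2 ≤ n) : sgen n n n = -((n : ℤ) - 1) := by
  simp [sgen_last_apply hn]

lemma sgen_last_apply_of_ne (hn : 2 ≤ n) {a : ℤ} (h1 : a ≠ (n : ℤ) - 1) (h2 : a ≠ n)
    (h3 : a ≠ -((n : ℤ) - 1)) (h4 : a ≠ -(n : ℤ)) : sgen n n a = a := by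
  rw [sgen_last_apply hn]
  split_ifs <;> omega

/-- `n` and `-(n-1)` are separated only by `-n` in the order on `±[n]`. -/
lemma dlt_neg_pred_iff (hn : 2 ≤ n) {a : ℤ} (h1 : a ≠ -((n : ℤ) - 1)) (h2 : a ≠ -(n : ℤ)) :
    dlt n (-((n : ℤ) - 1)) a ↔ dlt n n a := by
  unfold dlt dkey
  split_ifs <;> omega

end LastGenerator

theorem hop_conjugate_last_gen_general (n : ℕ) (hn : 2 ≤ n)
    (L : List ℤ)
    (h1 : (n : ℤ) - 1 ∉ L) (h2 : (n : ℤ) ∉ L)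
    (h3 : -((n : ℤ) - 1) ∉ L) (h4 : -(n : ℤ) ∉ L)
    (w : Perm ℤ) :
    sgen n n * hop n (-((n : ℤ) - 1)) L (sgen n n * w) = hop n (n : ℤ) L w := by
  have hL : ∀ q ∈ L, sgen n n q = q ∧ (dlt n (sgen n n n) q ↔ dlt n n q) := by
    intro q hq
    have ne1 : q ≠ (n : ℤ) - 1 := by rintro rfl; exact h1 hq
    have ne2 : q ≠ n := by rintro rfl; exact h2 hq
    have ne3 : q ≠ -((n : ℤ) - 1) := by rintro rfl; exact h3 hq
    have ne4 : q ≠ -(n : ℤ) := by rintro rfl; exact h4 hq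
    rw [sgen_last_natCast hn]
    exact ⟨sgen_last_apply_of_ne hn ne1 ne2 ne3 ne4, dlt_neg_pred_iff hn ne3 ne4⟩
  rw [← sgen_last_natCast hn, hop_mul_eq_mul_hop (sgen_last_neg hn) _ L hL, ← mul_assoc,
    sgen_last_mul_self hn, one_mul]

/-- for a list `L` of distinct elements of `±[n]` containing none of
`n-1, n, -(n-1), -n`, and `w ∈ D_n`, `s_n · h_{-(n-1),L}(s_n·w) = h_{n,L}(w)`. -/
theorem hop_conjugate_last_gen (n : ℕ) (hn : 2 ≤ n)
    (L : List ℤ) (hnd : L.Nodup) (hmem : ∀ a ∈ L, inPM n a)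
    (h1 : (n : ℤ) - 1 ∉ L) (h2 : (n : ℤ) ∉ L)
    (h3 : -((n : ℤ) - 1) ∉ L) (h4 : -(n : ℤ) ∉ L)
    (w : Perm ℤ) (hw : IsEvenSignedPerm n w) :
    sgen n n * hop n (-((n : ℤ) - 1)) L (sgen n n * w) = hop n (n : ℤ) L w :=
  hop_conjugate_last_gen_general n hn L h1 h2 h3 h4 w
end
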